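/- arXiv:2510.00576 — 2 statements merged into one kernel-verified Lean document; each statement's English description precedes it below -/
import Mathlib

section
/- Let ℓ, d ≥ 2 and let b₁, …, b_d ∈ ℝ^m be vectors such that b₂ − b₁, …, b_d − b₁ span a (d−1)-dimensional subspace of ℝ^m. Let B(bᵢ) denote the ℓ × mℓ block-diagonal matrix with ℓ copies of the row vector bᵢᵀ on the diagonal. Then the dℓ × (ℓ + mℓ) matrix M whose i-th block row is (E_ℓ | B(bᵢ)) (where E_ℓ is the ℓ×ℓ identity) has rank dℓ. -/
/-!
The hypothesis says exactly that `b₁, …, b_d` are affinely independent. A row relation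
`∑ g (i, r) • M (i, r) = 0` splits along the column blocks: for each `r` the identity columns
give `∑ᵢ g (i, r) = 0` and the `B` columns give `∑ᵢ g (i, r) • bᵢ = 0`, so affine independence
forces every `g (i, r)` to vanish and the `dℓ` rows are linearly independent.
-/

open Finset

theorem affineIndependent_of_finrank_span_range_sub_eq {K V ι : Type*} [DivisionRing K]
    [AddCommGroup V] [Module K V] [Fintype ι] (p : ι → V) (i₀ : ι)
    (h : Module.finrank K (Submodule.span K (Set.range fun i => p i - p i₀)) =
      Fintype.card ι - 1) :
    AffineIndependent K p := by
  have hcard : Fintype.card ι = (Fintype.card ι - 1) + 1 :=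
    (Nat.sub_add_cancel (Fintype.card_pos_iff.2 ⟨i₀⟩)).symm
  rw [affineIndependent_iff_le_finrank_vectorSpan K p hcard,
    vectorSpan_range_eq_span_range_vsub_right K p i₀]
  exact h.ge

section BlockRowMatrix

variable {K ι L κ : Type*} [Ring K] [Fintype ι] [Fintype L] [DecidableEq L]

/-- The matrix whose `i`-th block row is `(E_L | B(b i))`. -/
def blockRowMatrix (b : ι → κ → K) : Matrix (ι × L) (L ⊕ (L × κ)) K :=
  Matrix.of fun x => Sum.elim (fun c => if x.2 = c then 1 else 0)
    (fun y => if x.2 = y.1 then b x.1 y.2 else 0)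

theorem sum_smul_blockRowMatrix_inl (b : ι → κ → K) (g : ι × L → K) (c : L) :
    (∑ x, g x • (blockRowMatrix b).row x) (Sum.inl c) = ∑ i, g (i, c) := by
  simp [blockRowMatrix, Matrix.row, Fintype.sum_prod_type]

theorem sum_smul_blockRowMatrix_inr (b : ι → κ → K) (g : ι × L → K) (c : L) (j : κ) :
    (∑ x, g x • (blockRowMatrix b).row x) (Sum.inr (c, j)) = (∑ i, g (i, c) • b i) j := by
  simp [blockRowMatrix, Matrix.row, Fintype.sum_prod_type]

theorem AffineIndependent.linearIndependent_blockRowMatrix {b : ι → κ → K}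
    (hb : AffineIndependent K b) : LinearIndependent K (blockRowMatrix (L := L) b).row := by
  refine Fintype.linearIndependent_iff.2 fun g hg ⟨i, c⟩ => ?_
  have hsum : ∑ i, g (i, c) = 0 := by
    rw [← sum_smul_blockRowMatrix_inl b g c, hg, Pi.zero_apply]
  have hcomb : ∑ i, g (i, c) • b i = 0 := by
    ext j
    rw [← sum_smul_blockRowMatrix_inr b g c j, hg, Pi.zero_apply, Pi.zero_apply]
  exact hb.eq_zero_of_sum_eq_zero hsum hcomb i (mem_univ i)

end BlockRowMatrix

theorem AffineIndependent.rank_blockRowMatrix {K ι L κ : Type*} [Field K] [Fintype ι]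
    [Fintype L] [DecidableEq L] [Fintype κ] {b : ι → κ → K} (hb : AffineIndependent K b) :
    (blockRowMatrix (L := L) b).rank = Fintype.card ι * Fintype.card L := by
  rw [hb.linearIndependent_blockRowMatrix.rank_matrix, Fintype.card_prod]

/-- the stacked matrix `M` with block rows `(E_ℓ | B(bᵢ))` has rank `dℓ`
provided `b₂ - b₁, …, b_d - b₁` span a `(d-1)`-dimensional subspace. -/
theorem stmt4 (l d m : ℕ) (hd : 2 ≤ d)
    (b : Fin d → Fin m → ℝ)
    (hspan : Module.finrank ℝ (Submodule.span ℝ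
        (Set.range fun i : Fin d => b i - b ⟨0, by omega⟩)) = d - 1)
    (M : Matrix (Fin d × Fin l) (Fin l ⊕ (Fin l × Fin m)) ℝ)
    (hM1 : ∀ (i : Fin d) (r c : Fin l),
      M (i, r) (Sum.inl c) = if r = c then 1 else 0)
    (hM2 : ∀ (i : Fin d) (r c : Fin l) (j : Fin m),
      M (i, r) (Sum.inr (c, j)) = if r = c then b i j else 0) :
    M.rank = d * l := by
  have hb : AffineIndependent ℝ b :=
    affineIndependent_of_finrank_span_range_sub_eq b _ (by rwa [Fintype.card_fin])
  have hM : M = blockRowMatrix b := by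
    ext ⟨i, r⟩ (c | ⟨c, j⟩)
    · exact hM1 i r c
    · exact hM2 i r c j
  rw [hM, hb.rank_blockRowMatrix, Fintype.card_fin, Fintype.card_fin]
end

section
/- Let ℓ ≥ 3 and g(x) = (−x², −x³, 0, …, 0) : ℝ → ℝ^ℓ. Let Σ = {a ∈ ℝ^ℓ : x ↦ g(x) + (a₁x, …, a_ℓx) is not injective}. Then Σ contains a set of the form U′ × {0} ⊂ ℝ² × ℝ^{ℓ−2} with U′ a nonempty open subset of ℝ², and hence Σ does not have 2-dimensional Hausdorff measure zero in ℝ^ℓ. -/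
/-!
If `x ≠ y`, `p = x + y` and `q = x² + xy + y²`, then `px - x² = xy` and `qx - x³ = x²y + xy²`
are symmetric in `x, y`, so the perturbation `a = (p, q, 0, …, 0)` makes `g + a` identify `x`
and `y`. Since `x² + xy + y² = ¾ (x + y)² + ¼ (x - y)²`, every `(p, q)` in the open region
`q > ¾ p²` arises this way. That region sits isometrically in `ℝ^ℓ` as `U′ × {0}`, where
`μH[2]` is Lebesgue measure of the plane, hence positive.
-/

open MeasureTheory

def cuspCurve (l : ℕ) (x : ℝ) : Fin l → ℝ :=
  fun i => if (i : ℕ) = 0 then -x ^ 2 else if (i : ℕ) = 1 then -x ^ 3 else 0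

def planeEmbedding (l : ℕ) (u : ℝ × ℝ) : Fin l → ℝ :=
  fun i => if (i : ℕ) = 0 then u.1 else if (i : ℕ) = 1 then u.2 else 0

lemma isometry_planeEmbedding {l : ℕ} (hl : 2 ≤ l) : Isometry (planeEmbedding l) := by
  refine Isometry.of_dist_eq fun u v => ?_
  rw [Prod.dist_eq]
  refine le_antisymm ?_ ?_
  · refine (dist_pi_le_iff (by positivity)).2 fun i => ?_
    simp only [planeEmbedding]
    split_ifs
    · exact le_max_left _ _
    · exact le_max_right _ _
    · simp
  · refine max_le ?_ ?_
    · simpa [planeEmbedding] using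
        dist_le_pi_dist (planeEmbedding l u) (planeEmbedding l v) ⟨0, by omega⟩
    · simpa [planeEmbedding] using
        dist_le_pi_dist (planeEmbedding l u) (planeEmbedding l v) ⟨1, by omega⟩

lemma hausdorffMeasure_two_image_pos {X : Type*} [EMetricSpace X] [MeasurableSpace X]
    [BorelSpace X] {e : ℝ × ℝ → X} (he : Isometry e) {U : Set (ℝ × ℝ)} (hU : IsOpen U)
    (hne : U.Nonempty) : 0 < μH[2] (e '' U) := by
  rw [he.hausdorffMeasure_image (Or.inl zero_le_two), hausdorffMeasure_prod_real]
  exact hU.measure_pos volume hne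

lemma exists_ne_add_eq_sq_add_mul_add_sq_eq {p q : ℝ} (h : 3 / 4 * p ^ 2 < q) :
    ∃ x y : ℝ, x ≠ y ∧ x + y = p ∧ x ^ 2 + x * y + y ^ 2 = q := by
  set d := Real.sqrt (4 * q - 3 * p ^ 2)
  have hd_pos : 0 < d := Real.sqrt_pos.2 (by linarith)
  have hd_sq : d ^ 2 = 4 * q - 3 * p ^ 2 := Real.sq_sqrt (by linarith)
  refine ⟨(p + d) / 2, (p - d) / 2, ?_, by ring, by linear_combination hd_sq / 4⟩
  intro hxy
  linarith

lemma not_injective_cusp_add_planeEmbedding_mul (l : ℕ) {p q : ℝ} (h : 3 / 4 * p ^ 2 < q) :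
    ¬ Function.Injective fun x => cuspCurve l x + fun i => planeEmbedding l (p, q) i * x := by
  obtain ⟨x, y, hxy, hp, hq⟩ := exists_ne_add_eq_sq_add_mul_add_sq_eq h
  refine fun hinj => hxy (hinj (funext fun i => ?_))
  simp only [Pi.add_apply, cuspCurve, planeEmbedding]
  split_ifs
  · linear_combination (y - x) * hp
  · linear_combination (y - x) * hq
  · simp

/-- for `g(x) = (-x², -x³, 0, …, 0) : ℝ → ℝ^ℓ`, the set `Σ` of linear
perturbations `a` for which `g + a` is not injective contains a set `U′ × {0}` with `U′`
nonempty open in ℝ², and hence `Σ` does not have 2-dimensional Hausdorff measure zero. -/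
theorem stmt10 (l : ℕ) (hl : 3 ≤ l)
    (g : ℝ → Fin l → ℝ)
    (hg : g = fun (x : ℝ) (i : Fin l) => if (i : ℕ) = 0 then -x ^ 2 else if (i : ℕ) = 1 then -x ^ 3 else 0)
    (S : Set (Fin l → ℝ))
    (hS : S = {a : Fin l → ℝ | ¬ Function.Injective (fun x : ℝ => g x + fun i => a i * x)}) :
    (∃ U' : Set (ℝ × ℝ), IsOpen U' ∧ U'.Nonempty ∧
      ∀ u ∈ U',
        (fun i : Fin l => if (i : ℕ) = 0 then u.1 else if (i : ℕ) = 1 then u.2 else 0) ∈ S) ∧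
    μH[2] S ≠ 0 := by
  set U : Set (ℝ × ℝ) := {u | 3 / 4 * u.1 ^ 2 < u.2}
  have hU : IsOpen U := isOpen_lt (by fun_prop) continuous_snd
  have hne : U.Nonempty := ⟨(0, 1), by norm_num [U]⟩
  have hmem : ∀ u ∈ U, planeEmbedding l u ∈ S := by
    intro u hu
    rw [hS, hg]
    exact not_injective_cusp_add_planeEmbedding_mul l hu
  refine ⟨⟨U, hU, hne, hmem⟩, ne_of_gt ?_⟩
  calc 0 < μH[2] (planeEmbedding l '' U) :=
        hausdorffMeasure_two_image_pos (isometry_planeEmbedding (by omega)) hU hne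
    _ ≤ μH[2] S := measure_mono (Set.image_subset_iff.2 hmem)
end
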